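/- Let W be the C_4^{(1)} wedge-relation subspace in V ⊗ V (n = 4), i.e., W is spanned by the common relations together with v_{−1} ⊗ v_1 + v_1 ⊗ v_{−1} and v_{−4} ⊗ v_4 + q² v_4 ⊗ v_{−4}. Then in the quotient, v_{−1} ∧ v_1 − q^{−1} v_{−2} ∧ v_2 + q^{−2} v_{−3} ∧ v_3 − q^{−3} v_{−4} ∧ v_4 = 0 and v_1 ∧ v_{−1} − q v_2 ∧ v_{−2} + q² v_3 ∧ v_{−3} − q³ v_4 ∧ v_{−4} = 0. -/
import Mathlib


open TensorProduct Finset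

noncomputable section

abbrev K : Type := RatFunc ℚ
abbrev V : Type := ℤ →₀ K

/-- `q` in the field of rational functions `ℚ(q)`. -/
def q : K := RatFunc.X

/-- basis vectors `v_j` -/
def v (j : ℤ) : V := Finsupp.single j 1

/-- position of `j` in the order `1 ≺ 2 ≺ ⋯ ≺ n ≺ −n ≺ ⋯ ≺ −1`. -/
def ord (n j : ℤ) : ℤ := if 0 < j then j else 2 * n + 1 + j

/-- the common wedge relations -/
def commonRels (n : ℤ) : Set (V ⊗[K] V) :=
  {x | ∃ i : ℤ, 1 ≤ |i| ∧ |i| ≤ n ∧ x = v i ⊗ₜ[K] v i} ∪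
  {x | ∃ i j : ℤ, 1 ≤ |i| ∧ |i| ≤ n ∧ 1 ≤ |j| ∧ |j| ≤ n ∧
        ord n j < ord n i ∧ i ≠ j ∧ i ≠ -j ∧
        x = v i ⊗ₜ[K] v j + q • (v j ⊗ₜ[K] v i)} ∪
  {x | ∃ i : ℤ, 1 ≤ i ∧ i < n ∧
        x = v (-i) ⊗ₜ[K] v i + q ^ 2 • (v i ⊗ₜ[K] v (-i)) +
            q • (v (i+1) ⊗ₜ[K] v (-(i+1)) + v (-(i+1)) ⊗ₜ[K] v (i+1))}

/-- `W₁`: common relations plus `v₁ ⊗ v₋₁ + v₋₁ ⊗ v₁` -/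
def W₁ (n : ℤ) : Submodule K (V ⊗[K] V) :=
  Submodule.span K (commonRels n ∪ {v 1 ⊗ₜ[K] v (-1) + v (-1) ⊗ₜ[K] v 1})

/-- `W₂`: common relations plus `v₋ₙ ⊗ vₙ + q² vₙ ⊗ v₋ₙ` -/
def W₂ (n : ℤ) : Submodule K (V ⊗[K] V) :=
  Submodule.span K (commonRels n ∪ {v (-n) ⊗ₜ[K] v n + q ^ 2 • (v n ⊗ₜ[K] v (-n))})

/-- the `C_4^{(1)}` wedge relations -/
def WC4 : Submodule K (V ⊗[K] V) :=
  Submodule.span K (commonRels 4 ∪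
    {v (-1) ⊗ₜ[K] v 1 + v 1 ⊗ₜ[K] v (-1),
     v (-4) ⊗ₜ[K] v 4 + q ^ 2 • (v 4 ⊗ₜ[K] v (-4))})

/-! ### Auxiliary lemmas -/

/-- generic field identity behind the first relation -/
lemma helper1 {F : Type} [Field F] {M : Type} [AddCommGroup M] [Module F M]
    (a : F) (ha : a ≠ 0) (h2 : a ^ 2 - 1 ≠ 0)
    (A1 A2 A3 A4 B1 B2 B3 B4 : M) :
    A1 - a⁻¹ • A2 + (a ^ 2)⁻¹ • A3 - (a ^ 3)⁻¹ • A4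
      = (a ^ 3 * (a ^ 2 - 1))⁻¹ •
        ((a ^ 5) • (A1 + B1)
          + (-a ^ 3) • (A1 + a ^ 2 • B1 + a • (B2 + A2))
          + (a ^ 2) • (A2 + a ^ 2 • B2 + a • (B3 + A3))
          + (-a) • (A3 + a ^ 2 • B3 + a • (B4 + A4))
          + (A4 + a ^ 2 • B4)) := by
  match_scalars <;> field_simp <;> ring

/-- generic field identity behind the second relation -/
lemma helper2 {F : Type} [Field F] {M : Type} [AddCommGroup M] [Module F M]
    (a : F) (h2 : a ^ 2 - 1 ≠ 0)
    (A1 A2 A3 A4 B1 B2 B3 B4 : M) :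
    B1 - a • B2 + a ^ 2 • B3 - a ^ 3 • B4
      = (a ^ 2 - 1)⁻¹ •
        ((A1 + a ^ 2 • B1 + a • (B2 + A2))
          + (-a) • (A2 + a ^ 2 • B2 + a • (B3 + A3))
          + (a ^ 2) • (A3 + a ^ 2 • B3 + a • (B4 + A4))
          + (-1 : F) • (A1 + B1)
          + (-a ^ 3) • (A4 + a ^ 2 • B4)) := by
  match_scalars <;> field_simp <;> ring

lemma q_ne : q ≠ 0 := RatFunc.X_ne_zero

lemma q_sq_ne : q ^ 2 - 1 ≠ 0 := by
  have h : (Polynomial.X ^ 2 - 1 : Polynomial ℚ) ≠ 0 := by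
    intro h
    have := congrArg (Polynomial.coeff · 2) h
    simp [Polynomial.coeff_one] at this
  intro he
  apply h
  apply RatFunc.algebraMap_injective ℚ
  rw [map_sub, map_pow, RatFunc.algebraMap_X, map_one]
  simpa [q] using he

lemma R_mem (i : ℤ) (h1 : 1 ≤ i) (h4 : i < 4)
    (x : V ⊗[K] V)
    (hx : x = v (-i) ⊗ₜ[K] v i + q ^ 2 • (v i ⊗ₜ[K] v (-i)) +
        q • (v (i+1) ⊗ₜ[K] v (-(i+1)) + v (-(i+1)) ⊗ₜ[K] v (i+1))) :
    x ∈ WC4 :=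
  Submodule.subset_span (Or.inl (Or.inr ⟨i, h1, h4, hx⟩))

lemma S_mem : v (-1) ⊗ₜ[K] v 1 + v 1 ⊗ₜ[K] v (-1) ∈ WC4 :=
  Submodule.subset_span (Or.inr (by left; rfl))

lemma T_mem : v (-4) ⊗ₜ[K] v 4 + q ^ 2 • (v 4 ⊗ₜ[K] v (-4)) ∈ WC4 :=
  Submodule.subset_span (Or.inr (by right; rfl))

lemma R1_mem : v (-1) ⊗ₜ[K] v 1 + q ^ 2 • (v 1 ⊗ₜ[K] v (-1)) +
    q • (v 2 ⊗ₜ[K] v (-2) + v (-2) ⊗ₜ[K] v 2) ∈ WC4 :=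
  R_mem 1 (by norm_num) (by norm_num) _ (by norm_num)

lemma R2_mem : v (-2) ⊗ₜ[K] v 2 + q ^ 2 • (v 2 ⊗ₜ[K] v (-2)) +
    q • (v 3 ⊗ₜ[K] v (-3) + v (-3) ⊗ₜ[K] v 3) ∈ WC4 :=
  R_mem 2 (by norm_num) (by norm_num) _ (by norm_num)

lemma R3_mem : v (-3) ⊗ₜ[K] v 3 + q ^ 2 • (v 3 ⊗ₜ[K] v (-3)) +
    q • (v 4 ⊗ₜ[K] v (-4) + v (-4) ⊗ₜ[K] v 4) ∈ WC4 :=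
  R_mem 3 (by norm_num) (by norm_num) _ (by norm_num)

theorem stmt13 :
    (Submodule.Quotient.mk (p := WC4) (v (-1) ⊗ₜ[K] v 1)
      - q ^ (-1:ℤ) • Submodule.Quotient.mk (p := WC4) (v (-2) ⊗ₜ[K] v 2)
      + q ^ (-2:ℤ) • Submodule.Quotient.mk (p := WC4) (v (-3) ⊗ₜ[K] v 3)
      - q ^ (-3:ℤ) • Submodule.Quotient.mk (p := WC4) (v (-4) ⊗ₜ[K] v 4) = 0) ∧
    (Submodule.Quotient.mk (p := WC4) (v 1 ⊗ₜ[K] v (-1))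
      - q • Submodule.Quotient.mk (p := WC4) (v 2 ⊗ₜ[K] v (-2))
      + q ^ 2 • Submodule.Quotient.mk (p := WC4) (v 3 ⊗ₜ[K] v (-3))
      - q ^ 3 • Submodule.Quotient.mk (p := WC4) (v 4 ⊗ₜ[K] v (-4)) = 0) := by
  have e1 : q ^ (-1:ℤ) = q⁻¹ := by
    rw [zpow_neg, zpow_one]
  have e2 : q ^ (-2:ℤ) = (q ^ 2)⁻¹ := by
    rw [zpow_neg]; norm_cast
  have e3 : q ^ (-3:ℤ) = (q ^ 3)⁻¹ := by
    rw [zpow_neg]; norm_cast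
  constructor
  · rw [e1, e2, e3, ← Submodule.Quotient.mk_smul, ← Submodule.Quotient.mk_smul,
      ← Submodule.Quotient.mk_smul, ← Submodule.Quotient.mk_sub,
      ← Submodule.Quotient.mk_add, ← Submodule.Quotient.mk_sub,
      Submodule.Quotient.mk_eq_zero]
    rw [helper1 q q_ne q_sq_ne (v (-1) ⊗ₜ[K] v 1) (v (-2) ⊗ₜ[K] v 2)
      (v (-3) ⊗ₜ[K] v 3) (v (-4) ⊗ₜ[K] v 4) (v 1 ⊗ₜ[K] v (-1))
      (v 2 ⊗ₜ[K] v (-2)) (v 3 ⊗ₜ[K] v (-3)) (v 4 ⊗ₜ[K] v (-4))]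
    refine Submodule.smul_mem _ _ ?_
    refine add_mem (add_mem (add_mem (add_mem ?_ ?_) ?_) ?_) ?_
    · exact Submodule.smul_mem _ _ S_mem
    · exact Submodule.smul_mem _ _ R1_mem
    · exact Submodule.smul_mem _ _ R2_mem
    · exact Submodule.smul_mem _ _ R3_mem
    · exact T_mem
  · rw [← Submodule.Quotient.mk_smul, ← Submodule.Quotient.mk_smul,
      ← Submodule.Quotient.mk_smul, ← Submodule.Quotient.mk_sub,
      ← Submodule.Quotient.mk_add, ← Submodule.Quotient.mk_sub,
      Submodule.Quotient.mk_eq_zero]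
    rw [helper2 q q_sq_ne (v (-1) ⊗ₜ[K] v 1) (v (-2) ⊗ₜ[K] v 2)
      (v (-3) ⊗ₜ[K] v 3) (v (-4) ⊗ₜ[K] v 4) (v 1 ⊗ₜ[K] v (-1))
      (v 2 ⊗ₜ[K] v (-2)) (v 3 ⊗ₜ[K] v (-3)) (v 4 ⊗ₜ[K] v (-4))]
    refine Submodule.smul_mem _ _ ?_
    refine add_mem (add_mem (add_mem (add_mem ?_ ?_) ?_) ?_) ?_
    · exact R1_mem
    · exact Submodule.smul_mem _ _ R2_mem
    · exact Submodule.smul_mem _ _ R3_mem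
    · exact Submodule.smul_mem _ _ S_mem
    · exact Submodule.smul_mem _ _ T_mem
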